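/- arXiv:2401.16491 — 2 statements merged into one kernel-verified Lean document; each statement's English description precedes it below -/
import Mathlib

section
/- For every countable ordinal ξ with 1 ≤ ξ < ω₁, the Schreier family equals its modified version: S_ξ = S^M_ξ. -/
noncomputable section

open scoped Classical

/-- The first uncountable ordinal. -/
def omegaOne : Ordinal := (Cardinal.aleph 1).ord

/-- `A < B` for finite sets of naturals: every element of `A` is smaller than every
element of `B` (i.e. `max A < min B`, with the conventions `∅ < B` and `A < ∅`). -/
def finLT (A B : Finset ℕ) : Prop := ∀ a ∈ A, ∀ b ∈ B, a < b

/-- `n ≤ A`, i.e. `n ≤ min A` (with `min ∅ = ∞`). -/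
def finLE (n : ℕ) (A : Finset ℕ) : Prop := ∀ a ∈ A, n ≤ a

/-- The successor step in the definition of the Schreier families:
unions `E_1 ∪ ⋯ ∪ E_n` with `n ≤ E_1 < E_2 < ⋯ < E_n` and each `E_i` a nonempty member
of `F` (the empty set arises from `n = 0`). -/
def succStep (F : Set (Finset ℕ)) : Set (Finset ℕ) :=
  {A | ∃ (n : ℕ) (E : Fin n → Finset ℕ),
        (∀ i, E i ∈ F) ∧ (∀ i, (E i).Nonempty) ∧
        (∀ i j : Fin n, i < j → finLT (E i) (E j)) ∧
        (∀ i, finLE n (E i)) ∧ A = Finset.univ.biUnion E}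

/-- A system of Schreier families `S ξ` for `ξ < ω₁`, together with the chosen
`ξ`-approximating sequences `α ξ ·` (indexed by `n ≥ 1`) for limit ordinals `ξ < ω₁`,
satisfying the standing assumptions:  each `α ξ n` is a successor ordinal in `[1, ξ)`,
the sequence strictly increases to `ξ`, `α ξ 1 = 1`, and whenever
`A, B ∈ S (α ξ n)` with `1 < A < B` then `A ∪ B ∈ S (α ξ (n+1))`. -/
structure SchreierSystem where
  α : Ordinal → ℕ → Ordinal
  S : Ordinal → Set (Finset ℕ)
  S_zero : S 0 = {A : Finset ℕ | A = ∅ ∨ ∃ n : ℕ, A = {n}}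
  S_succ : ∀ γ : Ordinal, S (γ + 1) = succStep (S γ)
  S_limit : ∀ ξ : Ordinal, Order.IsSuccLimit ξ → ξ < omegaOne →
    S ξ = {E : Finset ℕ | ∃ n : ℕ, 1 ≤ n ∧ finLE n E ∧ E ∈ S (α ξ n)}
  α_pos : ∀ ξ : Ordinal, Order.IsSuccLimit ξ → ξ < omegaOne → ∀ n : ℕ, 1 ≤ n → 1 ≤ α ξ n
  α_lt : ∀ ξ : Ordinal, Order.IsSuccLimit ξ → ξ < omegaOne → ∀ n : ℕ, 1 ≤ n → α ξ n < ξ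
  α_succOrd : ∀ ξ : Ordinal, Order.IsSuccLimit ξ → ξ < omegaOne → ∀ n : ℕ, 1 ≤ n →
    ∃ β : Ordinal, α ξ n = β + 1
  α_mono : ∀ ξ : Ordinal, Order.IsSuccLimit ξ → ξ < omegaOne → ∀ n : ℕ, 1 ≤ n → α ξ n < α ξ (n + 1)
  α_tendsto : ∀ ξ : Ordinal, Order.IsSuccLimit ξ → ξ < omegaOne → ∀ β : Ordinal, β < ξ →
    ∃ n : ℕ, 1 ≤ n ∧ β < α ξ n
  α_one : ∀ ξ : Ordinal, Order.IsSuccLimit ξ → ξ < omegaOne → α ξ 1 = 1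
  α_union : ∀ ξ : Ordinal, Order.IsSuccLimit ξ → ξ < omegaOne → ∀ n : ℕ, 1 ≤ n →
    ∀ A B : Finset ℕ, A ∈ S (α ξ n) → B ∈ S (α ξ n) → finLE 2 A → finLT A B →
      A ∪ B ∈ S (α ξ (n + 1))

/-- `A` is a maximal element of the family `F` (with respect to inclusion). -/
def MaxIn (F : Set (Finset ℕ)) (A : Finset ℕ) : Prop :=
  A ∈ F ∧ ∀ B ∈ F, A ⊆ B → B = A

/-- The successor step in the definition of the modified Schreier families:
unions `E_1 ∪ ⋯ ∪ E_n` of pairwise disjoint nonempty members of `F` with `n ≤ E_i`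
for each `i`. -/
def succStepM (F : Set (Finset ℕ)) : Set (Finset ℕ) :=
  {A | ∃ (n : ℕ) (E : Fin n → Finset ℕ),
        (∀ i, E i ∈ F) ∧ (∀ i, (E i).Nonempty) ∧
        (∀ i j : Fin n, i ≠ j → Disjoint (E i) (E j)) ∧
        (∀ i, finLE n (E i)) ∧ A = Finset.univ.biUnion E}

/-- A Schreier system together with the modified Schreier families `S^M ξ`,
defined by the analogous recursion (using the same approximating sequences `α`). -/
structure ModSchreierSystem extends SchreierSystem where
  SM : Ordinal → Set (Finset ℕ)
  SM_zero : SM 0 = {A : Finset ℕ | A = ∅ ∨ ∃ n : ℕ, A = {n}}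
  SM_succ : ∀ γ : Ordinal, SM (γ + 1) = succStepM (SM γ)
  SM_limit : ∀ ξ : Ordinal, Order.IsSuccLimit ξ → ξ < omegaOne →
    SM ξ = {E : Finset ℕ | ∃ n : ℕ, 1 ≤ n ∧ finLE n E ∧ E ∈ SM (α ξ n)}

/-!
A member of `S^M_{γ+1}` is a union of `n` pairwise disjoint members of `S_γ` with minima at least
`n`, so it suffices to rearrange such a family into at most `n` successive members of `S_γ` with
the same union. By induction on `γ` one shows more: every finite disjoint family `E_1, …, E_k` in
`S_γ` can be rearranged into successive `F_1 < ⋯ < F_m` in `S_γ` with the same union such that for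
every `c` there are no more `F_j` than `E_i` with minimum below `c`.

At `γ = β + 1` each `E_i` splits into at most `min E_i` blocks in `S_β`; all blocks are rearranged
at level `β`, and the resulting successive list is cut into consecutive groups of `min E_i`
members, which the counting condition makes admissible. At a limit `ξ` the `E_i` are inserted one
at a time, smallest minimum last. A set `A ∈ S_{α(ξ,q)}` is pushed along the successive list: at
the first member `g` it overlaps, the part of `A` below `min g` together with `min g` stays in
`S_{α(ξ,q)}` (Schreier sets may be truncated this way), while the rest of `A` and `g ∖ {min g}`
are merged into one member of `S_{α(ξ, min g + 1)}` — by the rearrangement at level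
`α(ξ, min g)` and the assumption on `A ∪ B` — which is carried on.
-/

def listUnion (l : List (Finset ℕ)) : Finset ℕ := l.foldr (· ∪ ·) ∅

@[simp] theorem listUnion_nil : listUnion [] = ∅ := rfl

@[simp] theorem listUnion_cons (A : Finset ℕ) (l : List (Finset ℕ)) :
    listUnion (A :: l) = A ∪ listUnion l := rfl

@[simp] theorem listUnion_append (l₁ l₂ : List (Finset ℕ)) :
    listUnion (l₁ ++ l₂) = listUnion l₁ ∪ listUnion l₂ := by
  induction l₁ with
  | nil => simp
  | cons A l ih => simp [ih, Finset.union_assoc]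

@[simp] theorem mem_listUnion {e : ℕ} {l : List (Finset ℕ)} :
    e ∈ listUnion l ↔ ∃ A ∈ l, e ∈ A := by
  induction l with
  | nil => simp
  | cons A l ih => simp [ih]

theorem subset_listUnion {A : Finset ℕ} {l : List (Finset ℕ)} (h : A ∈ l) : A ⊆ listUnion l :=
  fun _ he => mem_listUnion.2 ⟨A, h, he⟩

theorem listUnion_mono {l l' : List (Finset ℕ)} (h : l ⊆ l') : listUnion l ⊆ listUnion l' :=
  fun _ he => by
    obtain ⟨A, hA, heA⟩ := mem_listUnion.1 he
    exact subset_listUnion (h hA) heA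

theorem disjoint_listUnion_right {A : Finset ℕ} {l : List (Finset ℕ)} :
    Disjoint A (listUnion l) ↔ ∀ B ∈ l, Disjoint A B := by
  simp only [Finset.disjoint_left, mem_listUnion]
  grind

theorem listUnion_flatMap {rows : List (Finset ℕ)} {f : Finset ℕ → List (Finset ℕ)}
    (h : ∀ r ∈ rows, listUnion (f r) = r) : listUnion (rows.flatMap f) = listUnion rows := by
  induction rows with
  | nil => rfl
  | cons r rows ih => simp_all

theorem List.Perm.listUnion_eq {l l' : List (Finset ℕ)} (h : l.Perm l') :
    listUnion l = listUnion l' := by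
  ext; simp [h.mem_iff]

theorem listUnion_ofFn {n : ℕ} (E : Fin n → Finset ℕ) :
    listUnion (List.ofFn E) = Finset.univ.biUnion E := by
  ext; simp

theorem finLE_listUnion {n : ℕ} {l : List (Finset ℕ)} :
    finLE n (listUnion l) ↔ ∀ A ∈ l, finLE n A := by
  simp only [finLE, mem_listUnion]
  grind

def finMin (A : Finset ℕ) : ℕ := sInf (A : Set ℕ)

theorem finMin_mem {A : Finset ℕ} (h : A.Nonempty) : finMin A ∈ A :=
  Nat.sInf_mem (s := (A : Set ℕ)) (by exact_mod_cast h)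

theorem finMin_le {A : Finset ℕ} {a : ℕ} (h : a ∈ A) : finMin A ≤ a :=
  Nat.sInf_le (by exact_mod_cast h)

@[simp] theorem finMin_singleton (n : ℕ) : finMin {n} = n := by
  simp [finMin]

theorem finLE_iff_le_finMin {A : Finset ℕ} {n : ℕ} (h : A.Nonempty) :
    finLE n A ↔ n ≤ finMin A :=
  ⟨fun hn => hn _ (finMin_mem h), fun hn _ ha => hn.trans (finMin_le ha)⟩

theorem finMin_le_finMin {A B : Finset ℕ} (hAB : A ⊆ B) (hA : A.Nonempty) :
    finMin B ≤ finMin A :=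
  finMin_le (hAB (finMin_mem hA))

theorem finLE_union {n : ℕ} {A B : Finset ℕ} : finLE n (A ∪ B) ↔ finLE n A ∧ finLE n B := by
  simp only [finLE, Finset.mem_union]
  grind

theorem finLE_filter_gt_union_erase_finMin (A g : Finset ℕ) :
    finLE (finMin g + 1) (A.filter (finMin g < ·) ∪ g.erase (finMin g)) := by
  refine finLE_union.2 ⟨fun e he => (Finset.mem_filter.1 he).2, fun e he => ?_⟩
  exact (finMin_le (Finset.mem_of_mem_erase he)).lt_of_ne (Finset.ne_of_mem_erase he).symm

theorem insert_filter_lt_union_filter_gt_union_erase {A B : Finset ℕ} {x : ℕ} (hxB : x ∈ B) :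
    insert x (A.filter (· < x)) ∪ (A.filter (x < ·) ∪ B.erase x) = A ∪ B := by
  ext e
  simp only [Finset.mem_union, Finset.mem_insert, Finset.mem_filter, Finset.mem_erase]
  grind

theorem finLT.disjoint {A B : Finset ℕ} (h : finLT A B) : Disjoint A B :=
  Finset.disjoint_left.2 fun a ha hb => lt_irrefl a (h a ha a hb)

theorem finLT.finMin_lt {A B : Finset ℕ} (h : finLT A B) (hA : A.Nonempty) (hB : B.Nonempty) :
    finMin A < finMin B :=
  h _ (finMin_mem hA) _ (finMin_mem hB)

theorem finLT_listUnion_right {A : Finset ℕ} {l : List (Finset ℕ)} :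
    finLT A (listUnion l) ↔ ∀ B ∈ l, finLT A B := by
  simp only [finLT, mem_listUnion]
  grind

theorem finLT_listUnion_of_pairwise_append {l₁ l₂ : List (Finset ℕ)}
    (h : (l₁ ++ l₂).Pairwise finLT) : finLT (listUnion l₁) (listUnion l₂) := by
  intro a ha b hb
  obtain ⟨A, hA, haA⟩ := mem_listUnion.1 ha
  obtain ⟨B, hB, hbB⟩ := mem_listUnion.1 hb
  exact (List.pairwise_append.1 h).2.2 A hA B hB a haA b hbB

def countBelow (c : ℕ) (l : List (Finset ℕ)) : ℕ := l.countP fun A => finMin A < c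

@[simp] theorem countBelow_nil (c : ℕ) : countBelow c [] = 0 := rfl

theorem countBelow_cons (c : ℕ) (A : Finset ℕ) (l : List (Finset ℕ)) :
    countBelow c (A :: l) = countBelow c l + if finMin A < c then 1 else 0 := by
  simp [countBelow, List.countP_cons]

theorem countBelow_append (c : ℕ) (l₁ l₂ : List (Finset ℕ)) :
    countBelow c (l₁ ++ l₂) = countBelow c l₁ + countBelow c l₂ :=
  List.countP_append

theorem countBelow_le_length (c : ℕ) (l : List (Finset ℕ)) : countBelow c l ≤ l.length :=
  List.countP_le_length

theorem List.Perm.countBelow_eq {l l' : List (Finset ℕ)} (h : l.Perm l') (c : ℕ) :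
    countBelow c l = countBelow c l' :=
  h.countP_eq _

theorem countBelow_eq_zero {c : ℕ} {l : List (Finset ℕ)} :
    countBelow c l = 0 ↔ ∀ A ∈ l, c ≤ finMin A := by
  simp [countBelow, List.countP_eq_zero]

theorem exists_countBelow_eq_length (l : List (Finset ℕ)) : ∃ c, countBelow c l = l.length :=
  ⟨(l.map finMin).sum + 1, List.countP_eq_length.2 fun A hA => by
    have := List.le_sum_of_mem (List.mem_map_of_mem (f := finMin) hA)
    simp only [decide_eq_true_eq]; omega⟩

theorem length_le_length_of_countBelow_le {l l' : List (Finset ℕ)}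
    (h : ∀ c, countBelow c l ≤ countBelow c l') : l.length ≤ l'.length := by
  obtain ⟨c, hc⟩ := exists_countBelow_eq_length l
  exact hc ▸ (h c).trans (countBelow_le_length c l')

theorem countBelow_drop {c : ℕ} {l : List (Finset ℕ)}
    (hl : l.Pairwise fun A B => finMin A ≤ finMin B) (k : ℕ) :
    countBelow c (l.drop k) = countBelow c l - k := by
  induction l generalizing k with
  | nil => simp
  | cons A l ih =>
    cases k with
    | zero => simp
    | succ k =>
      rw [List.drop_succ_cons, ih hl.of_cons, countBelow_cons]
      split_ifs with hA
      · omega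
      · have : countBelow c l = 0 := countBelow_eq_zero.2 fun B hB =>
          (not_lt.1 hA).trans (List.rel_of_pairwise_cons hl hB)
        omega

section

variable {F : Set (Finset ℕ)}

def IsSuccessiveIn (F : Set (Finset ℕ)) (l : List (Finset ℕ)) : Prop :=
  (∀ A ∈ l, A ∈ F ∧ A.Nonempty) ∧ l.Pairwise finLT

theorem IsSuccessiveIn.sublist {l l' : List (Finset ℕ)} (h : IsSuccessiveIn F l')
    (hl : l.Sublist l') : IsSuccessiveIn F l :=
  ⟨fun A hA => h.1 A (hl.subset hA), h.2.sublist hl⟩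

theorem IsSuccessiveIn.append {l₁ l₂ : List (Finset ℕ)} (h₁ : IsSuccessiveIn F l₁)
    (h₂ : IsSuccessiveIn F l₂) (h : finLT (listUnion l₁) (listUnion l₂)) :
    IsSuccessiveIn F (l₁ ++ l₂) := by
  refine ⟨fun A hA => (List.mem_append.1 hA).elim (h₁.1 A) (h₂.1 A),
    List.pairwise_append.2 ⟨h₁.2, h₂.2, fun A hA B hB a ha b hb => ?_⟩⟩
  exact h a (subset_listUnion hA ha) b (subset_listUnion hB hb)

theorem IsSuccessiveIn.cons {A : Finset ℕ} {l : List (Finset ℕ)} (hA : A ∈ F)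
    (hAne : A.Nonempty) (hl : IsSuccessiveIn F l) (h : finLT A (listUnion l)) :
    IsSuccessiveIn F (A :: l) :=
  IsSuccessiveIn.append (l₁ := [A]) ⟨by simp [hA, hAne], List.pairwise_singleton _ _⟩ hl
    (by simpa using h)

theorem IsSuccessiveIn.pairwise_finMin_le {l : List (Finset ℕ)} (h : IsSuccessiveIn F l) :
    l.Pairwise fun A B => finMin A ≤ finMin B :=
  h.2.imp_of_mem fun hA hB hAB => (hAB.finMin_lt (h.1 _ hA).2 (h.1 _ hB).2).le

theorem mem_succStep_iff {A : Finset ℕ} :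
    A ∈ succStep F ↔ ∃ l, IsSuccessiveIn F l ∧ finLE l.length (listUnion l) ∧ A = listUnion l := by
  constructor
  · rintro ⟨n, E, hF, hne, hlt, hle, rfl⟩
    refine ⟨List.ofFn E, ⟨?_, List.pairwise_ofFn.2 hlt⟩, ?_, (listUnion_ofFn E).symm⟩
    · simpa using fun i => ⟨hF i, hne i⟩
    · simpa [finLE_listUnion] using hle
  · rintro ⟨l, ⟨hl, hlt⟩, hle, rfl⟩
    refine ⟨l.length, l.get, fun i => (hl _ (l.get_mem i)).1, fun i => (hl _ (l.get_mem i)).2,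
      fun i j hij => List.pairwise_iff_get.1 hlt i j hij,
      fun i => finLE_listUnion.1 hle _ (l.get_mem i), ?_⟩
    rw [← listUnion_ofFn, List.ofFn_get]

theorem succStep_subset_succStepM : succStep F ⊆ succStepM F := by
  rintro A ⟨n, E, hF, hne, hlt, hle, rfl⟩
  refine ⟨n, E, hF, hne, fun i j hij => ?_, hle, rfl⟩
  rcases lt_or_gt_of_ne hij with h | h
  · exact (hlt i j h).disjoint
  · exact (hlt j i h).disjoint.symm

def IsSuccessiveRearrangement (F : Set (Finset ℕ)) (rows out : List (Finset ℕ)) : Prop :=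
  IsSuccessiveIn F out ∧ listUnion out = listUnion rows ∧
    ∀ c, countBelow c out ≤ countBelow c rows

def HasSuccessiveRearrangements (F : Set (Finset ℕ)) : Prop :=
  ∀ rows : List (Finset ℕ), rows.Pairwise Disjoint → (∀ r ∈ rows, r ∈ F ∧ r.Nonempty) →
    ∃ out, IsSuccessiveRearrangement F rows out

theorem HasSuccessiveRearrangements.of_sorted
    (h : ∀ rows : List (Finset ℕ), rows.Pairwise (fun A B => finMin A ≤ finMin B) →
      rows.Pairwise Disjoint → (∀ r ∈ rows, r ∈ F ∧ r.Nonempty) →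
      ∃ out, IsSuccessiveRearrangement F rows out) :
    HasSuccessiveRearrangements F := by
  intro rows hdisj hrows
  let sorted := rows.mergeSort fun A B => decide (finMin A ≤ finMin B)
  have hperm : sorted.Perm rows := List.mergeSort_perm _ _
  have hsorted : sorted.Pairwise fun A B => finMin A ≤ finMin B := by
    simpa using List.pairwise_mergeSort (le := fun A B => decide (finMin A ≤ finMin B))
      (by simp only [decide_eq_true_eq]; omega)
      (by simp only [Bool.or_eq_true, decide_eq_true_eq]; omega) rows
  obtain ⟨out, hout, hunion, hcount⟩ := h sorted hsorted
    ((hperm.pairwise_iff fun h => h.symm).2 hdisj) fun r hr => hrows r (hperm.subset hr)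
  exact ⟨out, hout, hunion.trans hperm.listUnion_eq,
    fun c => (hcount c).trans (hperm.countBelow_eq c).le⟩

theorem HasSuccessiveRearrangements.succStepM_subset (hF : HasSuccessiveRearrangements F) :
    succStepM F ⊆ succStep F := by
  rintro A ⟨n, E, hE, hne, hdisj, hle, rfl⟩
  obtain ⟨out, hout, hunion, hcount⟩ := hF (List.ofFn E)
    (List.pairwise_ofFn.2 fun i j hij => hdisj i j hij.ne) (by simpa using fun i => ⟨hE i, hne i⟩)
  have hlen : out.length ≤ n := by simpa using length_le_length_of_countBelow_le hcount
  refine mem_succStep_iff.2 ⟨out, hout, fun a ha => hlen.trans ?_, ?_⟩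
  · rw [hunion, listUnion_ofFn] at ha
    obtain ⟨i, -, hai⟩ := Finset.mem_biUnion.1 ha
    exact hle i a hai
  · rw [hunion, listUnion_ofFn]

theorem HasSuccessiveRearrangements.succStepM_eq (hF : HasSuccessiveRearrangements F) :
    succStepM F = succStep F :=
  hF.succStepM_subset.antisymm succStep_subset_succStepM

def weightBelow (c : ℕ) (l : List (Finset ℕ)) : ℕ :=
  (l.map fun A => if finMin A < c then finMin A else 0).sum

@[simp] theorem weightBelow_nil (c : ℕ) : weightBelow c [] = 0 := rfl

theorem weightBelow_cons (c : ℕ) (A : Finset ℕ) (l : List (Finset ℕ)) :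
    weightBelow c (A :: l) = (if finMin A < c then finMin A else 0) + weightBelow c l := by
  simp [weightBelow]

theorem weightBelow_eq_zero {c : ℕ} {l : List (Finset ℕ)} (h : ∀ A ∈ l, c ≤ finMin A) :
    weightBelow c l = 0 :=
  List.sum_eq_zero fun x hx => by
    obtain ⟨A, hA, rfl⟩ := List.mem_map.1 hx
    simp [(h A hA).not_gt]

theorem countBelow_flatMap_le_weightBelow {rows : List (Finset ℕ)} {f : Finset ℕ → List (Finset ℕ)}
    (hlen : ∀ r ∈ rows, (f r).length ≤ finMin r) (hmin : ∀ r ∈ rows, ∀ B ∈ f r, finMin r ≤ finMin B)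
    (c : ℕ) : countBelow c (rows.flatMap f) ≤ weightBelow c rows := by
  induction rows with
  | nil => simp [countBelow]
  | cons r rows ih =>
    rw [List.flatMap_cons, countBelow_append, weightBelow_cons]
    have ih := ih (fun r' hr' => hlen r' (by simp [hr'])) fun r' hr' => hmin r' (by simp [hr'])
    split_ifs with hr
    · linarith [countBelow_le_length c (f r), hlen r (by simp)]
    · have : countBelow c (f r) = 0 := countBelow_eq_zero.2 fun B hB =>
        (not_lt.1 hr).trans (hmin r (by simp) B hB)
      omega

theorem listUnion_take_mem_succStep {G : List (Finset ℕ)} {v : ℕ} (hG : IsSuccessiveIn F G)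
    (hGv : ∀ e ∈ listUnion G, v ≤ e) : listUnion (G.take v) ∈ succStep F :=
  mem_succStep_iff.2 ⟨G.take v, hG.sublist (List.take_sublist _ _), fun e he =>
    (List.length_take_le _ _).trans (hGv e (listUnion_mono (List.take_sublist _ _).subset he)),
    rfl⟩

/-- Cutting `G` into consecutive pieces, the `i`-th of as many members as the `i`-th row has
minimum, gives members of `succStep F`; `hcap` guarantees that each piece starts late enough. -/
theorem exists_succStep_chunks :
    ∀ (rows G : List (Finset ℕ)), rows.Pairwise (fun A B => finMin A ≤ finMin B) →
      IsSuccessiveIn F G → (∀ c, countBelow c G ≤ weightBelow c rows) →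
      ∃ out, IsSuccessiveIn (succStep F) out ∧ listUnion out = listUnion G ∧
        ∀ c, countBelow c out ≤ countBelow c rows
  | [], G, _, _, hcap => by
    obtain ⟨c, hc⟩ := exists_countBelow_eq_length G
    have hG : G = [] := List.eq_nil_of_length_eq_zero (by simpa [hc] using hcap c)
    exact ⟨[], ⟨by simp, List.Pairwise.nil⟩, by simp [hG], fun c => by simp⟩
  | r :: rows, G, hsort, hG, hcap => by
    set v := finMin r
    have hGv : ∀ e ∈ listUnion G, v ≤ e := fun e he => by
      have := hcap v
      rw [weightBelow_eq_zero (List.forall_mem_cons.2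
        ⟨le_rfl, fun A hA => List.rel_of_pairwise_cons hsort hA⟩)] at this
      obtain ⟨g, hg, heg⟩ := mem_listUnion.1 he
      exact (countBelow_eq_zero.1 (Nat.le_zero.1 this) g hg).trans (finMin_le heg)
    obtain ⟨out, hout, hunion, hcount⟩ := exists_succStep_chunks rows (G.drop v) hsort.of_cons
      (hG.sublist (List.drop_sublist _ _)) fun c => by
        have hdrop := countBelow_drop hG.pairwise_finMin_le v (c := c)
        have hsub := (List.drop_sublist v G).countP_le (p := fun A => decide (finMin A < c))
        have := hcap c
        rw [weightBelow_cons] at this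
        split_ifs at this <;> simp only [countBelow] at * <;> omega
    have hsplit := List.take_append_drop v G
    by_cases hnil : G.take v = []
    · rw [hnil, List.nil_append] at hsplit
      refine ⟨out, hout, hsplit ▸ hunion, fun c => (hcount c).trans ?_⟩
      rw [countBelow_cons]; omega
    have hchunk_ne : (listUnion (G.take v)).Nonempty := by
      obtain ⟨g, hg⟩ := List.exists_mem_of_ne_nil _ hnil
      exact ((hG.1 g (List.mem_of_mem_take hg)).2).mono (subset_listUnion hg)
    have hchunk_v : v ≤ finMin (listUnion (G.take v)) :=
      hGv _ (listUnion_mono (List.take_sublist _ _).subset (finMin_mem hchunk_ne))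
    refine ⟨listUnion (G.take v) :: out, hout.cons (listUnion_take_mem_succStep hG hGv) hchunk_ne
      (hunion ▸ finLT_listUnion_of_pairwise_append (hsplit.symm ▸ hG.2)), by
        rw [listUnion_cons, hunion, ← listUnion_append, hsplit], fun c => ?_⟩
    have := hcount c
    rw [countBelow_cons, countBelow_cons]
    split_ifs <;> omega

theorem HasSuccessiveRearrangements.succStep (hF : HasSuccessiveRearrangements F) :
    HasSuccessiveRearrangements (succStep F) := by
  refine .of_sorted fun rows hsort hdisj hrows => ?_
  choose! blocks hblocks hlen hunion using fun r hr => mem_succStep_iff.1 (hrows r hr).1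
  have hsub : ∀ r ∈ rows, ∀ B ∈ blocks r, B ⊆ r := fun r hr B hB =>
    (hunion r hr).symm ▸ subset_listUnion hB
  obtain ⟨G, hG, hGunion, hGcount⟩ := hF (rows.flatMap blocks)
    (List.pairwise_flatMap.2 ⟨fun r hr => (hblocks r hr).2.imp finLT.disjoint,
      hdisj.imp_of_mem fun hr hr' h B hB B' hB' => h.mono (hsub _ hr B hB) (hsub _ hr' B' hB')⟩)
    fun B hB => by
      obtain ⟨r, hr, hB⟩ := List.mem_flatMap.1 hB
      exact (hblocks r hr).1 B hB
  have hcap : ∀ c, countBelow c G ≤ weightBelow c rows := fun c => (hGcount c).trans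
    (countBelow_flatMap_le_weightBelow
      (fun r hr => (finLE_iff_le_finMin (hrows r hr).2).1 (by
        have := hlen r hr
        rwa [← hunion r hr] at this))
      (fun r hr B hB => finMin_le_finMin (hsub r hr B hB) ((hblocks r hr).1 B hB).2) c)
  obtain ⟨out, hout, hunion', hcount⟩ := exists_succStep_chunks rows G hsort hG hcap
  exact ⟨out, hout, by rw [hunion', hGunion, listUnion_flatMap fun r hr => (hunion r hr).symm],
    hcount⟩

theorem hasSuccessiveRearrangements_singletons :
    HasSuccessiveRearrangements {A : Finset ℕ | A = ∅ ∨ ∃ n, A = {n}} := by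
  refine .of_sorted fun rows hsort hdisj hrows => ⟨rows, ⟨hrows, ?_⟩, rfl, fun c => le_rfl⟩
  refine (hsort.and hdisj).imp_of_mem fun hA hB hAB => ?_
  obtain ⟨m, rfl⟩ := (hrows _ hA).1.resolve_left (hrows _ hA).2.ne_empty
  obtain ⟨n, rfl⟩ := (hrows _ hB).1.resolve_left (hrows _ hB).2.ne_empty
  have hmn : m ≠ n := fun h => by simp [h] at hAB
  simp only [finMin_singleton] at hAB
  simp only [finLT, Finset.mem_singleton, forall_eq]
  omega

theorem IsLowerSet.succStep (hF : IsLowerSet F) : IsLowerSet (succStep F) := by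
  intro A B hBA hA
  obtain ⟨l, hl, hle, rfl⟩ := mem_succStep_iff.1 hA
  have hmem : ∀ C ∈ (l.map (· ∩ B)).filter (·.Nonempty), ∃ D ∈ l, C = D ∩ B ∧ C.Nonempty := by
    simp only [List.mem_filter, List.mem_map, decide_eq_true_eq]
    rintro C ⟨⟨D, hD, rfl⟩, hne⟩
    exact ⟨D, hD, rfl, hne⟩
  refine mem_succStep_iff.2 ⟨(l.map (· ∩ B)).filter (·.Nonempty), ⟨fun C hC => ?_, ?_⟩,
    fun a ha => ?_, ?_⟩
  · obtain ⟨D, hD, rfl, hne⟩ := hmem C hC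
    exact ⟨hF Finset.inter_subset_left (hl.1 D hD).1, hne⟩
  · exact (List.pairwise_map.2 (hl.2.imp fun h a ha b hb =>
      h a (Finset.mem_inter.1 ha).1 b (Finset.mem_inter.1 hb).1)).filter _
  · obtain ⟨C, hC, haC⟩ := mem_listUnion.1 ha
    obtain ⟨D, hD, rfl, -⟩ := hmem C hC
    calc _ ≤ (l.map (· ∩ B)).length := List.length_filter_le _ _
      _ = l.length := List.length_map _
      _ ≤ a := hle a (subset_listUnion hD (Finset.mem_inter.1 haC).1)
  · ext e
    simp only [mem_listUnion, List.mem_filter, List.mem_map, decide_eq_true_eq]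
    constructor
    · intro he
      obtain ⟨D, hD, heD⟩ := mem_listUnion.1 (hBA he)
      exact ⟨D ∩ B, ⟨⟨D, hD, rfl⟩, ⟨e, Finset.mem_inter.2 ⟨heD, he⟩⟩⟩, Finset.mem_inter.2 ⟨heD, he⟩⟩
    · rintro ⟨_, ⟨⟨D, -, rfl⟩, -⟩, he⟩
      exact (Finset.mem_inter.1 he).2

def IsTruncationClosed (F : Set (Finset ℕ)) : Prop :=
  ∀ A ∈ F, ∀ x, 1 ≤ x → x ∉ A → (∃ a ∈ A, x < a) → insert x (A.filter (· < x)) ∈ F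

theorem exists_eq_append_cons_of_lt {l : List (Finset ℕ)} {x : ℕ}
    (h : ∃ a ∈ listUnion l, x < a) :
    ∃ l₁ B l₂, l = l₁ ++ B :: l₂ ∧ (∀ a ∈ listUnion l₁, a ≤ x) ∧ ∃ a ∈ B, x < a := by
  induction l with
  | nil => simp at h
  | cons B l ih =>
    by_cases hB : ∃ a ∈ B, x < a
    · exact ⟨[], B, l, rfl, by simp, hB⟩
    · simp only [not_exists, not_and, not_lt] at hB
      obtain ⟨l₁, C, l₂, rfl, hl₁, hC⟩ := ih (by
        obtain ⟨a, ha, hxa⟩ := h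
        rcases Finset.mem_union.1 ha with ha | ha
        · exact absurd (hB a ha) (not_le.2 hxa)
        · exact ⟨a, ha, hxa⟩)
      refine ⟨B :: l₁, C, l₂, rfl, fun a ha => ?_, hC⟩
      rcases Finset.mem_union.1 ha with ha | ha
      · exact hB a ha
      · exact hl₁ a ha

theorem IsTruncationClosed.succStep (hF : IsTruncationClosed F) :
    IsTruncationClosed (succStep F) := by
  intro A hA x hx hxA hxa
  obtain ⟨l, hl, hle, rfl⟩ := mem_succStep_iff.1 hA
  obtain ⟨l₁, B, l₂, rfl, hl₁, a₀, ha₀, hxa₀⟩ := exists_eq_append_cons_of_lt hxa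
  have hl₁x : ∀ a ∈ listUnion l₁, a < x := fun a ha =>
    (hl₁ a ha).lt_of_ne fun h => hxA (by simp [← h, ha])
  have hl₂x : ∀ a ∈ listUnion l₂, x < a := fun a ha =>
    hxa₀.trans (finLT_listUnion_of_pairwise_append (l₁ := [B]) (List.pairwise_append.1 hl.2).2.1
      a₀ (by simpa using ha₀) a ha)
  have hxl : l₁.length + 1 ≤ x := by
    cases l₁ with
    | nil => simpa using hx
    | cons C l₁ =>
      obtain ⟨y, hy⟩ := (hl.1 C (by simp)).2
      have := hle y (by simp [hy])
      have := hl₁x y (by simp [hy])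
      simp only [List.length_append, List.length_cons] at *
      omega
  have hB : insert x (B.filter (· < x)) ∈ F :=
    hF B (hl.1 B (by simp)).1 x hx (fun h => hxA (by simp [h])) ⟨a₀, ha₀, hxa₀⟩
  refine mem_succStep_iff.2 ⟨l₁ ++ [insert x (B.filter (· < x))],
    (hl.sublist (List.sublist_append_left _ _)).append
      ⟨by simp [hB], List.pairwise_singleton _ _⟩ fun a ha b hb => ?_, fun a ha => ?_, ?_⟩
  · simp only [listUnion_cons, listUnion_nil, Finset.union_empty, Finset.mem_insert,
      Finset.mem_filter] at hb
    rcases hb with rfl | ⟨hb, -⟩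
    · exact hl₁x a ha
    · exact finLT_listUnion_of_pairwise_append hl.2 a ha b (by simp [hb])
  · simp only [List.length_append, List.length_singleton]
    simp only [listUnion_append, listUnion_cons, listUnion_nil, Finset.union_empty,
      Finset.mem_union, Finset.mem_insert, Finset.mem_filter] at ha
    rcases ha with ha | rfl | ⟨ha, -⟩
    · have := hle a (by simp [ha])
      simp only [List.length_append, List.length_cons] at this
      omega
    · exact hxl
    · have := hle a (by simp [ha])
      simp only [List.length_append, List.length_cons] at this
      omega
  · ext y
    have h₁ := hl₁x y
    have h₂ := hl₂x y
    simp only [listUnion_append, listUnion_cons, listUnion_nil, Finset.union_empty,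
      Finset.mem_union, Finset.mem_insert, Finset.mem_filter] at *
    grind

end

namespace SchreierSystem

variable (𝒮 : SchreierSystem)

@[elab_as_elim]
theorem induction_lt_omegaOne {motive : ∀ γ, γ < omegaOne → Prop} (γ : Ordinal)
    (hγ : γ < omegaOne) (zero : ∀ h, motive 0 h)
    (succ : ∀ β (hβ : β < omegaOne) h, motive β hβ → motive (β + 1) h)
    (limit : ∀ ξ (hξ : ξ < omegaOne) (hlim : Order.IsSuccLimit ξ),
      (∀ n (hn : 1 ≤ n), motive (𝒮.α ξ n) ((𝒮.α_lt ξ hlim hξ n hn).trans hξ)) → motive ξ hξ) :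
    motive γ hγ := by
  induction γ using Ordinal.limitRecOn with
  | zero => exact zero hγ
  | add_one β ih =>
    have hβ : β < omegaOne := (lt_add_one β).trans hγ
    exact succ β hβ hγ (ih hβ)
  | limit ξ hlim ih => exact limit ξ hγ hlim fun n hn => ih _ (𝒮.α_lt ξ hlim hγ n hn) _

theorem empty_mem {γ : Ordinal} (hγ : γ < omegaOne) : ∅ ∈ 𝒮.S γ := by
  induction γ, hγ using 𝒮.induction_lt_omegaOne with
  | zero => rw [𝒮.S_zero]; exact Or.inl rfl
  | succ β _ _ _ =>
    exact 𝒮.S_succ β ▸ mem_succStep_iff.2 ⟨[], ⟨by simp, .nil⟩, by simp [finLE], rfl⟩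
  | limit ξ hξ hlim ih =>
    rw [𝒮.S_limit ξ hlim hξ]
    exact ⟨1, le_rfl, by simp [finLE], ih 1 le_rfl⟩

theorem singleton_mem {γ : Ordinal} (hγ : γ < omegaOne) {x : ℕ} (hx : 1 ≤ x) : {x} ∈ 𝒮.S γ := by
  induction γ, hγ using 𝒮.induction_lt_omegaOne with
  | zero => rw [𝒮.S_zero]; exact Or.inr ⟨x, rfl⟩
  | succ β _ _ ih =>
    exact 𝒮.S_succ β ▸
      mem_succStep_iff.2 ⟨[{x}], ⟨by simp [ih], by simp⟩, by simpa [finLE], by simp⟩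
  | limit ξ hξ hlim ih =>
    rw [𝒮.S_limit ξ hlim hξ]
    exact ⟨1, le_rfl, by simpa [finLE], ih 1 le_rfl⟩

theorem isLowerSet_S {γ : Ordinal} (hγ : γ < omegaOne) : IsLowerSet (𝒮.S γ) := by
  induction γ, hγ using 𝒮.induction_lt_omegaOne with
  | zero =>
    rw [𝒮.S_zero]
    rintro A B hBA (rfl | ⟨n, rfl⟩)
    · exact Or.inl (Finset.subset_empty.1 hBA)
    · rcases Finset.subset_singleton_iff.1 hBA with rfl | rfl
      · exact Or.inl rfl
      · exact Or.inr ⟨n, rfl⟩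
  | succ β _ _ ih => rw [𝒮.S_succ]; exact ih.succStep
  | limit ξ hξ hlim ih =>
    rw [𝒮.S_limit ξ hlim hξ]
    rintro A B hBA ⟨n, hn, hnA, hA⟩
    exact ⟨n, hn, fun b hb => hnA b (hBA hb), ih n hn hBA hA⟩

theorem isTruncationClosed_S {γ : Ordinal} (hγ : γ < omegaOne) : IsTruncationClosed (𝒮.S γ) := by
  induction γ, hγ using 𝒮.induction_lt_omegaOne with
  | zero =>
    rw [𝒮.S_zero]
    rintro A (rfl | ⟨n, rfl⟩) x - - ⟨a, ha, hxa⟩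
    · simp at ha
    · rw [Finset.mem_singleton] at ha
      subst ha
      exact Or.inr ⟨x, by rw [Finset.filter_singleton, if_neg (by omega), Finset.insert_empty]⟩
  | succ β _ _ ih => rw [𝒮.S_succ]; exact ih.succStep
  | limit ξ hξ hlim ih =>
    intro A hA x hx hxA hxa
    by_cases hbelow : (A.filter (· < x)).Nonempty
    · rw [𝒮.S_limit ξ hlim hξ] at hA ⊢
      obtain ⟨n, hn, hnA, hA⟩ := hA
      obtain ⟨y, hy⟩ := hbelow
      rw [Finset.mem_filter] at hy
      refine ⟨n, hn, fun b hb => ?_, ih n hn A hA x hx hxA hxa⟩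
      rcases Finset.mem_insert.1 hb with rfl | hb
      · exact (hnA y hy.1).trans hy.2.le
      · exact hnA b (Finset.mem_filter.1 hb).1
    · rw [Finset.not_nonempty_iff_eq_empty.1 hbelow]
      exact 𝒮.singleton_mem hξ hx

section Limit

variable {ξ : Ordinal}

theorem mem_S_α_of_le (hlim : Order.IsSuccLimit ξ) (hξ : ξ < omegaOne) {A : Finset ℕ}
    (hA2 : finLE 2 A) {k k' : ℕ} (hk : 1 ≤ k) (hkk' : k ≤ k') (hA : A ∈ 𝒮.S (𝒮.α ξ k)) :
    A ∈ 𝒮.S (𝒮.α ξ k') := by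
  induction k', hkk' using Nat.le_induction with
  | base => exact hA
  | succ m hm ih =>
    have hm1 : 1 ≤ m := hk.trans hm
    simpa using 𝒮.α_union ξ hlim hξ m hm1 A ∅ ih
      (𝒮.empty_mem ((𝒮.α_lt ξ hlim hξ m hm1).trans hξ)) hA2 (by simp [finLT])

theorem union_mem_S_α_succ (hlim : Order.IsSuccLimit ξ) (hξ : ξ < omegaOne) {w : ℕ} (hw : 1 ≤ w)
    (hR : HasSuccessiveRearrangements (𝒮.S (𝒮.α ξ w))) {X Y : Finset ℕ}
    (hX : X ∈ 𝒮.S (𝒮.α ξ w)) (hY : Y ∈ 𝒮.S (𝒮.α ξ w)) (hXY : Disjoint X Y)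
    (h2 : finLE 2 (X ∪ Y)) : X ∪ Y ∈ 𝒮.S (𝒮.α ξ (w + 1)) := by
  have hraise {A : Finset ℕ} (hA : A ∈ 𝒮.S (𝒮.α ξ w)) (hAXY : A ⊆ X ∪ Y) :
      A ∈ 𝒮.S (𝒮.α ξ (w + 1)) :=
    𝒮.mem_S_α_of_le hlim hξ (fun a ha => h2 a (hAXY ha)) hw (Nat.le_succ w) hA
  obtain rfl | hXne := X.eq_empty_or_nonempty
  · simpa using hraise hY (by simp)
  obtain rfl | hYne := Y.eq_empty_or_nonempty
  · simpa using hraise hX (by simp)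
  obtain ⟨out, hout, hunion, hcount⟩ := hR [X, Y] (by simpa using hXY) (by simp [*])
  have hlen : out.length ≤ 2 := by simpa using length_le_length_of_countBelow_le hcount
  have hsub : ∀ H ∈ out, H ⊆ X ∪ Y := fun H hH => by simpa [hunion] using subset_listUnion hH
  rw [show X ∪ Y = listUnion out by simp [hunion]]
  match out, hout, hlen, hsub with
  | [], _, _, _ => simpa using 𝒮.empty_mem ((𝒮.α_lt ξ hlim hξ _ (by omega)).trans hξ)
  | [H], hout, _, hsub => simpa using hraise (hout.1 H (by simp)).1 (hsub H (by simp))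
  | [H₁, H₂], hout, _, hsub =>
    simpa using 𝒮.α_union ξ hlim hξ w hw H₁ H₂ (hout.1 H₁ (by simp)).1 (hout.1 H₂ (by simp)).1
      (fun a ha => h2 a (hsub H₁ (by simp) ha)) (List.rel_of_pairwise_cons hout.2 (by simp))

theorem mem_S_limit_iff (hlim : Order.IsSuccLimit ξ) (hξ : ξ < omegaOne) {A : Finset ℕ} :
    A ∈ 𝒮.S ξ ↔ ∃ k, 1 ≤ k ∧ finLE k A ∧ A ∈ 𝒮.S (𝒮.α ξ k) := by
  rw [𝒮.S_limit ξ hlim hξ]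
  rfl

theorem insert_filter_lt_mem_S (hlim : Order.IsSuccLimit ξ) (hξ : ξ < omegaOne)
    {A : Finset ℕ} {q x : ℕ} (hq : 1 ≤ q) (hqA : finLE q A) (hA : A ∈ 𝒮.S (𝒮.α ξ q))
    (hqx : q ≤ x) (hxA : x ∉ A) (hxa : ∃ a ∈ A, x < a) :
    insert x (A.filter (· < x)) ∈ 𝒮.S ξ := by
  refine (𝒮.mem_S_limit_iff hlim hξ).2 ⟨q, hq, fun b hb => ?_,
    𝒮.isTruncationClosed_S ((𝒮.α_lt ξ hlim hξ q hq).trans hξ) A hA x (hq.trans hqx) hxA hxa⟩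
  rcases Finset.mem_insert.1 hb with rfl | hb
  · exact hqx
  · exact hqA b (Finset.mem_filter.1 hb).1

theorem filter_gt_union_erase_mem_S_α (hlim : Order.IsSuccLimit ξ) (hξ : ξ < omegaOne)
    (hR : ∀ n, 1 ≤ n → HasSuccessiveRearrangements (𝒮.S (𝒮.α ξ n))) {A g : Finset ℕ} {q : ℕ}
    (hq : 1 ≤ q) (hA : A ∈ 𝒮.S (𝒮.α ξ q)) (hg : g ∈ 𝒮.S ξ) (hgne : g.Nonempty)
    (hqg : q ≤ finMin g) (hAg : Disjoint A g) :
    A.filter (finMin g < ·) ∪ g.erase (finMin g) ∈ 𝒮.S (𝒮.α ξ (finMin g + 1)) := by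
  obtain ⟨p, hp, hpg, hg⟩ := (𝒮.mem_S_limit_iff hlim hξ).1 hg
  have h2 : finLE 2 (A.filter (finMin g < ·) ∪ g.erase (finMin g)) := fun e he => by
    have := finLE_filter_gt_union_erase_finMin A g e he
    omega
  have hw : 1 ≤ finMin g := hq.trans hqg
  refine 𝒮.union_mem_S_α_succ hlim hξ hw (hR _ hw) ?_ ?_ ?_ h2
  · exact 𝒮.mem_S_α_of_le hlim hξ (finLE_union.1 h2).1 hq hqg
      (𝒮.isLowerSet_S ((𝒮.α_lt ξ hlim hξ q hq).trans hξ) (Finset.filter_subset _ _) hA)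
  · exact 𝒮.mem_S_α_of_le hlim hξ (finLE_union.1 h2).2 hp ((finLE_iff_le_finMin hgne).1 hpg)
      (𝒮.isLowerSet_S ((𝒮.α_lt ξ hlim hξ p hp).trans hξ) (Finset.erase_subset _ _) hg)
  · exact Finset.disjoint_of_subset_left (Finset.filter_subset _ _)
      (Finset.disjoint_of_subset_right (Finset.erase_subset _ _) hAg)

/-- Inserting `A` into the successive list `G`: wherever `A` overlaps the next member `g`, the part
of `A` below `min g` together with `min g` is split off, and the rest of `A` is carried on,
merged with the rest of `g` one level higher up the approximating sequence. -/
theorem exists_insert (hlim : Order.IsSuccLimit ξ) (hξ : ξ < omegaOne)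
    (hR : ∀ n, 1 ≤ n → HasSuccessiveRearrangements (𝒮.S (𝒮.α ξ n))) :
    ∀ (G : List (Finset ℕ)) {A : Finset ℕ} {q : ℕ}, 1 ≤ q → finLE q A → A ∈ 𝒮.S (𝒮.α ξ q) →
      A.Nonempty → IsSuccessiveIn (𝒮.S ξ) G → finLE q (listUnion G) →
      Disjoint A (listUnion G) →
      ∃ H out, IsSuccessiveIn (𝒮.S ξ) (H :: out) ∧ listUnion (H :: out) = A ∪ listUnion G ∧
        ∀ c, countBelow c out ≤ countBelow c G
  | [], A, q, hq, hqA, hA, hAne, _, _, _ =>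
    ⟨A, [], ⟨by simp [(𝒮.mem_S_limit_iff hlim hξ).2 ⟨q, hq, hqA, hA⟩, hAne], by simp⟩, by simp,
      fun _ => le_rfl⟩
  | g :: G, A, q, hq, hqA, hA, hAne, hG, hqG, hAG => by
    set w := finMin g
    have hgne := (hG.1 g (by simp)).2
    have hwg : w ∈ g := finMin_mem hgne
    have hgG : finLT g (listUnion G) := finLT_listUnion_right.2 (List.pairwise_cons.1 hG.2).1
    have hGw : finLE (w + 1) (listUnion G) := hgG w hwg
    have hqw : q ≤ w := hqG w (by simp [hwg])
    have hAg : Disjoint A g := disjoint_listUnion_right.1 hAG g (by simp)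
    have hwA : w ∉ A := fun h => Finset.disjoint_left.1 hAg h hwg
    by_cases hAw : ∀ a ∈ A, a < w
    · refine ⟨A, g :: G, IsSuccessiveIn.cons ((𝒮.mem_S_limit_iff hlim hξ).2 ⟨q, hq, hqA, hA⟩)
        hAne hG fun a ha b hb => ?_, rfl, fun _ => le_rfl⟩
      rcases Finset.mem_union.1 hb with hb | hb
      · exact (hAw a ha).trans_le (finMin_le hb)
      · exact (hAw a ha).trans (hGw b hb)
    obtain ⟨a, haA, hwa⟩ : ∃ a ∈ A, w < a := by
      simp only [not_forall, not_lt] at hAw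
      obtain ⟨a, haA, hwa⟩ := hAw
      exact ⟨a, haA, hwa.lt_of_ne fun h => hwA (h ▸ haA)⟩
    obtain ⟨H, out, hout, hunion, hcount⟩ := exists_insert hlim hξ hR G (q := w + 1) (by omega)
      (finLE_filter_gt_union_erase_finMin A g)
      (𝒮.filter_gt_union_erase_mem_S_α hlim hξ hR hq hA (hG.1 g (by simp)).1 hgne hqw hAg)
      ⟨a, Finset.mem_union_left _ (Finset.mem_filter.2 ⟨haA, hwa⟩)⟩
      (hG.sublist (List.sublist_cons_self _ _)) hGw
      (Finset.disjoint_union_left.2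
        ⟨(hAG.mono_right Finset.subset_union_right).mono_left (Finset.filter_subset _ _),
          hgG.disjoint.mono_left (Finset.erase_subset _ _)⟩)
    have hright : finLE (w + 1) (listUnion (H :: out)) :=
      hunion ▸ finLE_union.2 ⟨finLE_filter_gt_union_erase_finMin A g, hGw⟩
    refine ⟨insert w (A.filter (· < w)), H :: out,
      hout.cons (𝒮.insert_filter_lt_mem_S hlim hξ hq hqA hA hqw hwA ⟨a, haA, hwa⟩)
        (Finset.insert_nonempty _ _) fun b hb e he => ?_, ?_, fun c => ?_⟩
    · have := hright e he
      rcases Finset.mem_insert.1 hb with rfl | hb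
      · omega
      · have := (Finset.mem_filter.1 hb).2; omega
    · rw [listUnion_cons, hunion, listUnion_cons, ← Finset.union_assoc,
        insert_filter_lt_union_filter_gt_union_erase hwg, Finset.union_assoc]
    · have hH : w < finMin H :=
        hright _ (subset_listUnion List.mem_cons_self (finMin_mem (hout.1 H (by simp)).2))
      have := hcount c
      rw [countBelow_cons, countBelow_cons]
      split_ifs <;> omega

theorem hasSuccessiveRearrangements_limit (hlim : Order.IsSuccLimit ξ) (hξ : ξ < omegaOne)
    (hR : ∀ n, 1 ≤ n → HasSuccessiveRearrangements (𝒮.S (𝒮.α ξ n))) :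
    HasSuccessiveRearrangements (𝒮.S ξ) := by
  refine .of_sorted fun rows hsort hdisj hrows => ?_
  induction rows with
  | nil => exact ⟨[], ⟨by simp, .nil⟩, rfl, fun _ => le_rfl⟩
  | cons r rows ih =>
    obtain ⟨G, hG, hGunion, hGcount⟩ :=
      ih hsort.of_cons hdisj.of_cons fun r' hr' => hrows r' (List.mem_cons_of_mem _ hr')
    have hr := hrows r (by simp)
    obtain ⟨p, hp, hpr, hr'⟩ := (𝒮.mem_S_limit_iff hlim hξ).1 hr.1
    have hr_le : ∀ e ∈ listUnion (r :: rows), finMin r ≤ e := fun e he => by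
      obtain ⟨C, hC, heC⟩ := mem_listUnion.1 he
      rcases List.mem_cons.1 hC with rfl | hC
      · exact finMin_le heC
      · exact (List.rel_of_pairwise_cons hsort hC).trans (finMin_le heC)
    obtain ⟨H, out, hout, hunion, hcount⟩ := 𝒮.exists_insert hlim hξ hR G hp hpr hr' hr.2 hG
      (fun e he => ((finLE_iff_le_finMin hr.2).1 hpr).trans
        (hr_le e (by simp [← hGunion, he])))
      (hGunion ▸ disjoint_listUnion_right.2 (List.pairwise_cons.1 hdisj).1)
    have hunion' : listUnion (H :: out) = listUnion (r :: rows) := by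
      rw [hunion, hGunion, listUnion_cons]
    refine ⟨H :: out, hout, hunion', fun c => ?_⟩
    have hH : finMin r ≤ finMin H := hr_le _ (hunion' ▸
      subset_listUnion List.mem_cons_self (finMin_mem (hout.1 H (by simp)).2))
    have := (hcount c).trans (hGcount c)
    rw [countBelow_cons, countBelow_cons]
    split_ifs <;> omega

end Limit

theorem hasSuccessiveRearrangements {γ : Ordinal} (hγ : γ < omegaOne) :
    HasSuccessiveRearrangements (𝒮.S γ) := by
  induction γ, hγ using 𝒮.induction_lt_omegaOne with
  | zero => rw [𝒮.S_zero]; exact hasSuccessiveRearrangements_singletons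
  | succ β _ _ ih => rw [𝒮.S_succ]; exact ih.succStep
  | limit ξ hξ hlim ih => exact 𝒮.hasSuccessiveRearrangements_limit hlim hξ ih

end SchreierSystem

theorem schreier_eq_modified_general (𝒮 : ModSchreierSystem) (ξ : Ordinal) (hξ : ξ < omegaOne) :
    𝒮.S ξ = 𝒮.SM ξ := by
  induction ξ, hξ using 𝒮.induction_lt_omegaOne with
  | zero => rw [𝒮.S_zero, 𝒮.SM_zero]
  | succ β hβ _ ih =>
    rw [𝒮.S_succ, 𝒮.SM_succ, ← ih, (𝒮.hasSuccessiveRearrangements hβ).succStepM_eq]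
  | limit ξ hξ hlim ih =>
    rw [𝒮.S_limit ξ hlim hξ, 𝒮.SM_limit ξ hlim hξ]
    ext E
    exact exists_congr fun n => and_congr_right fun hn => by rw [ih n hn]

/-- For every countable ordinal `1 ≤ ξ < ω₁`, the Schreier family
coincides with its modified version: `S_ξ = S^M_ξ`. -/
theorem schreier_eq_modified (𝒮 : ModSchreierSystem) (ξ : Ordinal)
    (h1 : 1 ≤ ξ) (hξ : ξ < omegaOne) :
    𝒮.S ξ = 𝒮.SM ξ :=
  schreier_eq_modified_general 𝒮 ξ hξ
end
end

section
/- Let F be a regular family of finite subsets of ℕ and 0 < θ < 1. Assume (A_j)_{j=1}^ℓ is an F-allowable sequence of length ℓ, and A'_ℓ is a spread of A_ℓ that is disjoint from A_1 ∪ ⋯ ∪ A_{ℓ-1}. Then (A_1, A_2, …, A_{ℓ-1}, A'_ℓ) is also an F-allowable sequence of length ℓ. -/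
noncomputable section

open scoped Classical

/-- The minimum of a finite set of naturals (`0` if the set is empty; it is only ever
used for nonempty sets). -/
def sMin (A : Finset ℕ) : ℕ := sInf (A : Set ℕ)

/-- The composition `M[N]` of two families of finite subsets of `ℕ`:
all unions `F_1 ∪ ⋯ ∪ F_k` with `F_i ∈ N` nonempty, `F_1 < F_2 < ⋯ < F_k` and
`{min F_i : i = 1, …, k} ∈ M`. -/
def famComp (M N : Set (Finset ℕ)) : Set (Finset ℕ) :=
  {A | ∃ (k : ℕ) (F : Fin k → Finset ℕ),
        (∀ i, F i ∈ N) ∧ (∀ i, (F i).Nonempty) ∧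
        (∀ i j : Fin k, i < j → finLT (F i) (F j)) ∧
        (Finset.univ.image fun i => sMin (F i)) ∈ M ∧
        A = Finset.univ.biUnion F}

/-- `B` is a spread of `A`: there is an injection `f` of `A` onto `B` with `a ≤ f a`
for all `a ∈ A` (equivalently, writing `A = {a_1 < ⋯ < a_n}` and
`B = {b_1 < ⋯ < b_n}`, one has `a_i ≤ b_i` for all `i`). -/
def IsSpread (A B : Finset ℕ) : Prop :=
  ∃ f : ℕ → ℕ, Set.InjOn f A ∧ (∀ a ∈ A, a ≤ f a) ∧ B = A.image f

/-- A family of finite subsets of `ℕ` is regular if it is hereditary, spreading, and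
compact as a subset of `{0,1}^ℕ` (with the product of discrete topologies). -/
def IsRegularFam (F : Set (Finset ℕ)) : Prop :=
  (∀ A ∈ F, ∀ B ⊆ A, B ∈ F) ∧
  (∀ A ∈ F, ∀ B : Finset ℕ, IsSpread A B → B ∈ F) ∧
  IsCompact ((fun A : Finset ℕ => fun n : ℕ => decide (n ∈ A)) '' F : Set (ℕ → Bool))

/-- Elements of `c₀₀` (and the functionals on it): finitely supported real sequences. -/
abbrev Fn := ℕ →₀ ℝ

/-- A (finite) sequence of finite sets is `F`-allowable if the sets are nonempty,
pairwise disjoint and `{min E_i : i ≤ d} ∈ F`. -/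
def AllowableSeq (F : Set (Finset ℕ)) {d : ℕ} (E : Fin d → Finset ℕ) : Prop :=
  (∀ i, (E i).Nonempty) ∧ (∀ i j : Fin d, i ≠ j → Disjoint (E i) (E j)) ∧
  (Finset.univ.image fun i => sMin (E i)) ∈ F

/-- The sets `K^M_m(F, θ)` generating the norming set of the modified Tsirelson space
`T_M[F, θ]`. -/
def KMn (F : Set (Finset ℕ)) (θ : ℝ) : ℕ → Set Fn
  | 0 => {f | f = 0 ∨ ∃ n : ℕ, f = Finsupp.single n 1 ∨ f = Finsupp.single n (-1)}
  | (m + 1) => KMn F θ m ∪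
      {f | ∃ (d : ℕ) (g : Fin d → Fn), (∀ i, g i ∈ KMn F θ m) ∧
            AllowableSeq F (fun i => (g i).support) ∧ f = θ • ∑ i, g i}

/-- `P^M_m(F, θ)`: the elements of `K^M_m(F, θ)` with nonnegative coefficients. -/
def PMn (F : Set (Finset ℕ)) (θ : ℝ) (m : ℕ) : Set Fn :=
  {f | f ∈ KMn F θ m ∧ ∀ n : ℕ, 0 ≤ f n}

/-- `1*_A = Σ_{s ∈ A} e*_s`. -/
def oneStar (A : Finset ℕ) : Fn := ∑ s ∈ A, Finsupp.single s (1 : ℝ)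

/-- `(A_j)_{j=1}^{ℓ}` (here indexed by `Fin ℓ`, with `A_j` carrying the coefficient
`θ^(j+1)`) is an `F`-allowable sequence of length `ℓ`: the `A_j` are pairwise
disjoint, the last one is nonempty, and `Σ_j θ^j 1*_{A_j} ∈ P^M_ℓ(F, θ)`. -/
def AllowSeqFun (F : Set (Finset ℕ)) (θ : ℝ) (ℓ : ℕ) (A : Fin ℓ → Finset ℕ) : Prop :=
  (∀ i j : Fin ℓ, i ≠ j → Disjoint (A i) (A j)) ∧
  (∀ h : 0 < ℓ, (A ⟨ℓ - 1, Nat.sub_lt h Nat.one_pos⟩).Nonempty) ∧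
  (∑ j : Fin ℓ, θ ^ ((j : ℕ) + 1) • oneStar (A j)) ∈ PMn F θ ℓ



/-! ### Auxiliary lemmas -/

lemma sMin_mem {A : Finset ℕ} (h : A.Nonempty) : sMin A ∈ A := by
  have : (A : Set ℕ).Nonempty := by exact_mod_cast h
  exact_mod_cast Nat.sInf_mem this

lemma sMin_le {A : Finset ℕ} {a : ℕ} (ha : a ∈ A) : sMin A ≤ a :=
  Nat.sInf_le (by exact_mod_cast ha)

lemma le_sMin_image {A : Finset ℕ} (hne : A.Nonempty) {σ : ℕ → ℕ}
    (hle : ∀ a ∈ A, a ≤ σ a) : sMin A ≤ sMin (A.image σ) := by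
  obtain ⟨a, ha, heq⟩ := Finset.mem_image.1 (sMin_mem (hne.image σ))
  calc sMin A ≤ a := sMin_le ha
    _ ≤ σ a := hle a ha
    _ = sMin (A.image σ) := heq

/-- The set of minima of the images is a spread of the set of minima. -/
lemma spread_mins {k : ℕ} (E : Fin k → Finset ℕ) (hne : ∀ i, (E i).Nonempty)
    (σ : ℕ → ℕ)
    (hinj : ∀ i j, ∀ a ∈ E i, ∀ b ∈ E j, σ a = σ b → a = b)
    (hle : ∀ i, ∀ a ∈ E i, a ≤ σ a)
    (hdisj : ∀ i j : Fin k, i ≠ j → Disjoint (E i) (E j)) :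
    IsSpread (Finset.univ.image fun i => sMin (E i))
      (Finset.univ.image fun i => sMin ((E i).image σ)) := by
  have himdisj : ∀ i j : Fin k, i ≠ j → Disjoint ((E i).image σ) ((E j).image σ) := by
    intro i j hij
    rw [Finset.disjoint_left]
    rintro x hxi hxj
    obtain ⟨a, ha, rfl⟩ := Finset.mem_image.1 hxi
    obtain ⟨b, hb, hba⟩ := Finset.mem_image.1 hxj
    have hba' : b = a := hinj j i b hb a ha hba
    subst hba'
    exact Finset.disjoint_left.1 (hdisj i j hij) ha hb
  set τ : ℕ → ℕ :=
    fun x => if h : ∃ i, sMin (E i) = x then sMin ((E h.choose).image σ) else x with hτ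
  have key : ∀ i, τ (sMin (E i)) = sMin ((E i).image σ) := by
    intro i
    have h : ∃ j, sMin (E j) = sMin (E i) := ⟨i, rfl⟩
    have hch : sMin (E h.choose) = sMin (E i) := h.choose_spec
    have hji : h.choose = i := by
      by_contra hne'
      have h1 : sMin (E h.choose) ∈ E h.choose := sMin_mem (hne _)
      have h2 : sMin (E h.choose) ∈ E i := by rw [hch]; exact sMin_mem (hne i)
      exact Finset.disjoint_left.1 (hdisj h.choose i hne') h1 h2
    simp only [hτ, dif_pos h, hji]
  refine ⟨τ, ?_, ?_, ?_⟩
  · rintro x hx y hy hxy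
    simp only [Finset.coe_image, Set.mem_image] at hx hy
    obtain ⟨i, -, rfl⟩ := hx
    obtain ⟨j, -, rfl⟩ := hy
    rw [key, key] at hxy
    by_cases hij : i = j
    · rw [hij]
    · exfalso
      have h1 : sMin ((E i).image σ) ∈ (E i).image σ := sMin_mem ((hne i).image σ)
      have h2 : sMin ((E i).image σ) ∈ (E j).image σ := hxy ▸ sMin_mem ((hne j).image σ)
      exact Finset.disjoint_left.1 (himdisj i j hij) h1 h2
  · intro x hx
    obtain ⟨i, -, rfl⟩ := Finset.mem_image.1 hx
    rw [key]
    exact le_sMin_image (hne i) (hle i)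
  · rw [Finset.image_image]
    refine (Finset.image_congr ?_).symm
    intro i _
    exact key i

/-- `KMn` is closed under pushing forward along a map which is injective and
nondecreasing on the support. -/
lemma KMn_mapDomain (F : Set (Finset ℕ)) (hF : IsRegularFam F) (θ : ℝ) (hθ0 : θ ≠ 0) :
    ∀ (n : ℕ) (f : Fn), f ∈ KMn F θ n → ∀ σ : ℕ → ℕ,
      Set.InjOn σ ↑f.support → (∀ s ∈ f.support, s ≤ σ s) →
      Finsupp.mapDomain σ f ∈ KMn F θ n := by
  intro n
  induction n with
  | zero =>
    intro f hf σ _ _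
    rcases hf with h0 | ⟨n, h1 | h1⟩
    · exact Or.inl (by rw [h0, Finsupp.mapDomain_zero])
    · exact Or.inr ⟨σ n, Or.inl (by rw [h1, Finsupp.mapDomain_single])⟩
    · exact Or.inr ⟨σ n, Or.inr (by rw [h1, Finsupp.mapDomain_single])⟩
  | succ n ih =>
    intro f hf σ hinj hle
    rcases hf with hf | ⟨d, g, hg, ⟨hne, hdis, hmins⟩, hfeq⟩
    · exact Or.inl (ih f hf σ hinj hle)
    · right
      have hsupp : f.support = Finset.univ.biUnion (fun i => (g i).support) := by
        rw [hfeq, Finsupp.support_smul_eq hθ0,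
          Finsupp.support_sum_eq_biUnion _ (fun i j hij => hdis i j hij)]
      have hsub : ∀ i, (g i).support ⊆ f.support := by
        intro i
        rw [hsupp]
        intro x hx
        exact Finset.mem_biUnion.2 ⟨i, Finset.mem_univ i, hx⟩
      have hinj' : ∀ i, Set.InjOn σ ↑(g i).support :=
        fun i => hinj.mono (Finset.coe_subset.2 (hsub i))
      have hsupp' : ∀ i, (Finsupp.mapDomain σ (g i)).support = (g i).support.image σ :=
        fun i => Finsupp.mapDomain_support_of_injOn _ (hinj' i)
      have hinj2 : ∀ i j, ∀ a ∈ (g i).support, ∀ b ∈ (g j).support, σ a = σ b → a = b := by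
        intro i j a ha b hb hab
        exact hinj (by exact_mod_cast hsub i ha) (by exact_mod_cast hsub j hb) hab
      refine ⟨d, fun i => Finsupp.mapDomain σ (g i), ?_, ⟨?_, ?_, ?_⟩, ?_⟩
      · intro i
        exact ih _ (hg i) σ (hinj' i) (fun s hs => hle s (hsub i hs))
      · intro i
        show (Finsupp.mapDomain σ (g i)).support.Nonempty
        rw [hsupp']
        exact (hne i).image σ
      · intro i j hij
        show Disjoint (Finsupp.mapDomain σ (g i)).support (Finsupp.mapDomain σ (g j)).support
        rw [hsupp', hsupp', Finset.disjoint_left]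
        rintro x hxi hxj
        obtain ⟨a, ha, rfl⟩ := Finset.mem_image.1 hxi
        obtain ⟨b, hb, hba⟩ := Finset.mem_image.1 hxj
        have hba' : b = a := hinj2 j i b hb a ha hba
        subst hba'
        exact Finset.disjoint_left.1 (hdis i j hij) ha hb
      · show (Finset.univ.image fun i => sMin ((Finsupp.mapDomain σ (g i)).support)) ∈ F
        have heq : (Finset.univ.image fun i => sMin ((Finsupp.mapDomain σ (g i)).support))
            = Finset.univ.image fun i => sMin (((g i).support).image σ) := by
          apply Finset.image_congr
          intro i _
          simp only [Function.comp]
          rw [hsupp']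
        rw [heq]
        exact hF.2.1 _ hmins _
          (spread_mins _ hne σ hinj2 (fun i a ha => hle a (hsub i ha)) hdis)
      · rw [hfeq, Finsupp.mapDomain_smul, Finsupp.mapDomain_finset_sum]

lemma oneStar_apply (A : Finset ℕ) (n : ℕ) :
    oneStar A n = if n ∈ A then 1 else 0 := by
  classical
  rw [oneStar, Finsupp.finset_sum_apply]
  simp [Finsupp.single_apply]

lemma oneStar_support (A : Finset ℕ) : (oneStar A).support ⊆ A := by
  intro n hn
  rw [Finsupp.mem_support_iff, oneStar_apply] at hn
  by_contra h
  simp [h] at hn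

lemma mapDomain_oneStar (A : Finset ℕ) {σ : ℕ → ℕ} (hinj : Set.InjOn σ ↑A) :
    Finsupp.mapDomain σ (oneStar A) = oneStar (A.image σ) := by
  rw [oneStar, Finsupp.mapDomain_finset_sum]
  simp only [Finsupp.mapDomain_single]
  rw [oneStar, Finset.sum_image (fun a ha b hb hab => hinj ha hb hab)]

/-- Let `F` be regular and `0 < θ < 1`.  If `(A_j)_{j=1}^{ℓ}` is an
`F`-allowable sequence of length `ℓ` and `A'_ℓ` is a spread of `A_ℓ` disjoint from
`A_1 ∪ ⋯ ∪ A_{ℓ-1}`, then `(A_1, …, A_{ℓ-1}, A'_ℓ)` is also an `F`-allowable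
sequence of length `ℓ`. -/
theorem allowSeq_spread (F : Set (Finset ℕ)) (hF : IsRegularFam F)
    (θ : ℝ) (hθ0 : 0 < θ) (hθ1 : θ < 1)
    (m : ℕ) (A : Fin (m + 1) → Finset ℕ) (hA : AllowSeqFun F θ (m + 1) A)
    (A' : Finset ℕ) (hsp : IsSpread (A (Fin.last m)) A')
    (hdisj : ∀ i : Fin (m + 1), i ≠ Fin.last m → Disjoint A' (A i)) :
    AllowSeqFun F θ (m + 1) (Function.update A (Fin.last m) A') := by
  classical
  obtain ⟨hAdis, hAne, hSK, hSpos⟩ :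
      (∀ i j : Fin (m+1), i ≠ j → Disjoint (A i) (A j)) ∧
      (∀ _ : 0 < m + 1, (A ⟨m + 1 - 1, Nat.sub_lt (Nat.succ_pos m) Nat.one_pos⟩).Nonempty) ∧
      (∑ j : Fin (m+1), θ ^ ((j : ℕ) + 1) • oneStar (A j)) ∈ KMn F θ (m+1) ∧
      (∀ n : ℕ, 0 ≤ (∑ j : Fin (m+1), θ ^ ((j : ℕ) + 1) • oneStar (A j)) n) := by
    obtain ⟨h1, h2, h3, h4⟩ := hA
    exact ⟨h1, h2, h3, h4⟩
  obtain ⟨fsp, hfinj, hfle, hA'⟩ := hsp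
  have hlast : (⟨m + 1 - 1, Nat.sub_lt (Nat.succ_pos m) Nat.one_pos⟩ : Fin (m+1))
      = Fin.last m := rfl
  have hAlast : (A (Fin.last m)).Nonempty := by
    have := hAne (Nat.succ_pos m)
    rwa [hlast] at this
  set σ : ℕ → ℕ := fun n => if n ∈ A (Fin.last m) then fsp n else n with hσ
  have hσ_last : ∀ a ∈ A (Fin.last m), σ a = fsp a := by
    intro a ha; simp [hσ, ha]
  have hσ_other : ∀ j : Fin (m+1), j ≠ Fin.last m → ∀ a ∈ A j, σ a = a := by
    intro j hj a ha
    have : a ∉ A (Fin.last m) := Finset.disjoint_left.1 (hAdis j _ hj) ha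
    simp [hσ, this]
  have himg_last : (A (Fin.last m)).image σ = A' := by
    rw [hA']
    exact Finset.image_congr (fun a ha => hσ_last a ha)
  have himg_other : ∀ j : Fin (m+1), j ≠ Fin.last m → (A j).image σ = A j := by
    intro j hj
    rw [Finset.image_congr (g := id) (fun a ha => hσ_other j hj a ha), Finset.image_id]
  have himg : ∀ j : Fin (m+1), (A j).image σ = Function.update A (Fin.last m) A' j := by
    intro j
    by_cases hj : j = Fin.last m
    · subst hj; rw [himg_last, Function.update_self]
    · rw [himg_other j hj, Function.update_of_ne hj]
  set U : Finset ℕ := Finset.univ.biUnion A with hU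
  have hmemU : ∀ (j : Fin (m+1)), ∀ a ∈ A j, a ∈ U := by
    intro j a ha
    exact Finset.mem_biUnion.2 ⟨j, Finset.mem_univ j, ha⟩
  have hσinjU : Set.InjOn σ ↑U := by
    rintro a ha b hb hab
    rw [Finset.mem_coe, hU, Finset.mem_biUnion] at ha hb
    obtain ⟨i, -, hai⟩ := ha
    obtain ⟨j, -, hbj⟩ := hb
    by_cases haL : a ∈ A (Fin.last m) <;> by_cases hbL : b ∈ A (Fin.last m)
    · exact hfinj haL hbL (by rwa [hσ_last a haL, hσ_last b hbL] at hab)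
    · exfalso
      have hjL : j ≠ Fin.last m := fun h => hbL (h ▸ hbj)
      have h1 : σ a ∈ A' := by
        rw [hσ_last a haL, hA']
        exact Finset.mem_image_of_mem _ haL
      have h2 : σ b ∈ A j := by rw [hσ_other j hjL b hbj]; exact hbj
      exact Finset.disjoint_left.1 (hdisj j hjL) h1 (hab ▸ h2)
    · exfalso
      have hiL : i ≠ Fin.last m := fun h => haL (h ▸ hai)
      have h1 : σ b ∈ A' := by
        rw [hσ_last b hbL, hA']
        exact Finset.mem_image_of_mem _ hbL
      have h2 : σ a ∈ A i := by rw [hσ_other i hiL a hai]; exact hai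
      exact Finset.disjoint_left.1 (hdisj i hiL) h1 (hab.symm ▸ h2)
    · rwa [hσ_other i (fun h => haL (h ▸ hai)) a hai,
        hσ_other j (fun h => hbL (h ▸ hbj)) b hbj] at hab
  have hσleU : ∀ a ∈ U, a ≤ σ a := by
    intro a _
    by_cases haL : a ∈ A (Fin.last m)
    · rw [hσ_last a haL]; exact hfle a haL
    · simp [hσ, haL]
  set S : Fn := ∑ j : Fin (m+1), θ ^ ((j : ℕ) + 1) • oneStar (A j) with hS
  have hSsupp : S.support ⊆ U := by
    refine Finset.Subset.trans Finsupp.support_finset_sum ?_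
    intro x hx
    obtain ⟨j, -, hj⟩ := Finset.mem_biUnion.1 hx
    have : x ∈ (oneStar (A j)).support := Finsupp.support_smul hj
    exact hmemU j x (oneStar_support _ this)
  have hmap : Finsupp.mapDomain σ S
      = ∑ j : Fin (m+1), θ ^ ((j : ℕ) + 1) •
          oneStar (Function.update A (Fin.last m) A' j) := by
    rw [hS, Finsupp.mapDomain_finset_sum]
    refine Finset.sum_congr rfl ?_
    intro j _
    rw [Finsupp.mapDomain_smul,
      mapDomain_oneStar _ (hσinjU.mono (fun x hx => hmemU j x hx)), himg j]
  refine ⟨?_, ?_, ?_, ?_⟩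
  · intro i j hij
    by_cases hi : i = Fin.last m
    · subst hi
      rw [Function.update_self, Function.update_of_ne (fun h => hij h.symm)]
      exact hdisj j (fun h => hij h.symm)
    · by_cases hj : j = Fin.last m
      · subst hj
        rw [Function.update_self, Function.update_of_ne hi]
        exact (hdisj i hi).symm
      · rw [Function.update_of_ne hi, Function.update_of_ne hj]
        exact hAdis i j hij
  · intro h
    rw [hlast, Function.update_self, hA']
    exact hAlast.image fsp
  · rw [← hmap]
    exact KMn_mapDomain F hF θ (ne_of_gt hθ0) (m+1) S hSK σ
      (hσinjU.mono (Finset.coe_subset.2 hSsupp)) (fun s hs => hσleU s (hSsupp hs))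
  · intro n
    rw [Finsupp.finset_sum_apply]
    refine Finset.sum_nonneg ?_
    intro j _
    rw [Finsupp.smul_apply, smul_eq_mul]
    refine mul_nonneg (pow_nonneg (le_of_lt hθ0) _) ?_
    rw [oneStar_apply]
    split <;> norm_num
end
end
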